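/- arXiv:2007.09018 — 4 statements merged into one kernel-verified Lean document; each statement's English description precedes it below -/
import Mathlib

section
/- Let G be a connected finite undirected multigraph with s, t ∈ V(G), s ≠ t, and let Z ⊆ E(G) be a star (s,t)-cut. Let Ĥ ⊆ V(G) ∖ {s,t} and let s_H ∈ V(G) ∖ Ĥ be such that every edge of G with exactly one endpoint in Ĥ has its other endpoint equal to s_H, and let H = G[Ĥ ∪ {s_H}]. Let t_H ∈ Ĥ with t_H ∉ R_s(Z). Then either Z ∩ E(H) = ∅, or Z ∩ E(H) is a star (s_H, t_H)-cut of H. -/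
/-!
A finite undirected multigraph (parallel edges allowed, no loops) is modelled by a
vertex type `V`, an edge type `E` (both finite) and an endpoint map `ends : E → Sym2 V`
such that no edge is a loop (`¬ (ends e).IsDiag`).
-/

namespace FlowAug

variable {V E : Type}

/-- Two vertices are adjacent in `G - X` if some edge outside `X` joins them. -/
def Adj (ends : E → Sym2 V) (X : Set E) (u v : V) : Prop :=
  ∃ e, e ∉ X ∧ ends e = s(u, v)

/-- Reachability in `G - X`. -/
def Reach (ends : E → Sym2 V) (X : Set E) : V → V → Prop :=
  Relation.ReflTransGen (Adj ends X)

/-- `R_S(X)` : the set of vertices reachable from the vertex set `S` in `G - X`. -/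
def RS (ends : E → Sym2 V) (X : Set E) (S : Set V) : Set V :=
  {v | ∃ u ∈ S, Reach ends X u v}

/-- `δ(S)` : the set of edges with exactly one endpoint in `S`. -/
def edgeBoundary (ends : E → Sym2 V) (S : Set V) : Set E :=
  {e | ∃ u v, ends e = s(u, v) ∧ u ∈ S ∧ v ∉ S}

/-- `X` is an `(S,T)`-cut. -/
def IsCut (ends : E → Sym2 V) (X : Set E) (S T : Set V) : Prop :=
  RS ends X S ∩ RS ends X T = ∅

/-- `X` is a minimal `(S,T)`-cut: no proper subset of `X` is an `(S,T)`-cut. -/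
def IsMinimalCut (ends : E → Sym2 V) (X : Set E) (S T : Set V) : Prop :=
  IsCut ends X S T ∧ ∀ Y : Set E, Y ⊂ X → ¬ IsCut ends Y S T

/-- `X` is an `(S,T)`-cut of minimum cardinality. -/
def IsMinimumCut (ends : E → Sym2 V) (X : Set E) (S T : Set V) : Prop :=
  IsCut ends X S T ∧ ∀ Y : Set E, IsCut ends Y S T → X.ncard ≤ Y.ncard

/-- `X` is an `(S,T)`-cut that is closest to `S`: every `(S,T)`-cut `X' ≠ X` with
`R_S(X') ⊆ R_S(X)` satisfies `|X'| > |X|`. -/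
def IsClosestCut (ends : E → Sym2 V) (X : Set E) (S T : Set V) : Prop :=
  IsCut ends X S T ∧
    ∀ X' : Set E, IsCut ends X' S T → X' ≠ X →
      RS ends X' S ⊆ RS ends X S → X.ncard < X'.ncard

/-- `λ_G(s,t)` : the minimum cardinality of an `(s,t)`-cut (equivalently, by Menger's
theorem, the maximum number of pairwise edge-disjoint `(s,t)`-paths). -/
noncomputable def lamCut (ends : E → Sym2 V) (s t : V) : ℕ :=
  sInf {n | ∃ X : Set E, IsCut ends X {s} {t} ∧ X.ncard = n}

/-- `Z_{s,t}` : the edges of `Z` with one endpoint in `R_s(Z)` and one in `R_t(Z)`. -/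
def Zst (ends : E → Sym2 V) (s t : V) (Z : Set E) : Set E :=
  {e | e ∈ Z ∧ ∃ u v, ends e = s(u, v) ∧ u ∈ RS ends Z {s} ∧ v ∈ RS ends Z {t}}

/-- `Z` is a special `(s,t)`-cut: `Z` is an `(s,t)`-cut and `Z_{s,t}` is an `(s,t)`-cut. -/
def IsSpecial (ends : E → Sym2 V) (s t : V) (Z : Set E) : Prop :=
  IsCut ends Z {s} {t} ∧ IsCut ends (Zst ends s t Z) {s} {t}

/-- `Z` is eligible for `(s,t)`: special, and every edge of `Z` has its endpoints in
different connected components of `G - Z`. -/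
def IsEligible (ends : E → Sym2 V) (s t : V) (Z : Set E) : Prop :=
  IsSpecial ends s t Z ∧ ∀ e ∈ Z, ∀ u v : V, ends e = s(u, v) → ¬ Reach ends Z u v

/-- `Z` is a star `(s,t)`-cut: an `(s,t)`-cut each of whose edges has exactly one
endpoint in `R_s(Z)`. -/
def IsStarCut (ends : E → Sym2 V) (s t : V) (Z : Set E) : Prop :=
  IsCut ends Z {s} {t} ∧
    ∀ e ∈ Z, ∃ u v : V, ends e = s(u, v) ∧ u ∈ RS ends Z {s} ∧ v ∉ RS ends Z {s}

/-- A path from `s` to `t` in the multigraph described by `ends`, given by its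
sequence of vertices and traversed edges. -/
structure MGPath (V E : Type) (ends : E → Sym2 V) (s t : V) where
  n : ℕ
  vert : Fin (n + 1) → V
  edge : Fin n → E
  vert_zero : vert 0 = s
  vert_last : vert (Fin.last n) = t
  ends_eq : ∀ i : Fin n, ends (edge i) = s(vert i.castSucc, vert i.succ)

/-- A family of paths is (pairwise) edge-disjoint: no edge is used twice, neither on
a single path nor on two different paths. -/
def EdgeDisjoint {ends : E → Sym2 V} {s t : V} {k : ℕ}
    (P : Fin k → MGPath V E ends s t) : Prop :=
  Function.Injective fun p : (Σ i : Fin k, Fin (P i).n) => (P p.1).edge p.2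

/-- `P` is a witnessing `(s,t)`-flow for `Z`: a family of `λ_G(s,t)` pairwise
edge-disjoint `(s,t)`-paths such that every edge of `Z_{s,t}` occurs on a path of `P`
and every path of `P` contains exactly one edge of `Z`. -/
def IsWitnessingFlow (ends : E → Sym2 V) (s t : V) (Z : Set E) {k : ℕ}
    (P : Fin k → MGPath V E ends s t) : Prop :=
  k = lamCut ends s t ∧ EdgeDisjoint P ∧
    (∀ e ∈ Zst ends s t Z, ∃ (i : Fin k) (j : Fin (P i).n), (P i).edge j = e) ∧
    ∀ i : Fin k, ∃! j : Fin (P i).n, (P i).edge j ∈ Z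

/-- The vertices occurring on the paths of a family `P`. -/
def pathVerts {ends : E → Sym2 V} {s t : V} {k : ℕ}
    (P : Fin k → MGPath V E ends s t) : Set V :=
  {v | ∃ (i : Fin k) (m : Fin ((P i).n + 1)), (P i).vert m = v}

/-- The edges occurring on the paths of a family `P`. -/
def pathEdges {ends : E → Sym2 V} {s t : V} {k : ℕ}
    (P : Fin k → MGPath V E ends s t) : Set E :=
  {e | ∃ (i : Fin k) (j : Fin (P i).n), (P i).edge j = e}

/-- The arcs obtained by orienting every edge of every path of `P` in the forward
direction (from `s` towards `t`). -/
def DirAdjOnFlow {ends : E → Sym2 V} {s t : V} {k : ℕ}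
    (P : Fin k → MGPath V E ends s t) (u v : V) : Prop :=
  ∃ (i : Fin k) (l : Fin (P i).n), (P i).vert l.castSucc = u ∧ (P i).vert l.succ = v

/-- `N[S]` : the closed neighborhood of `S`. -/
def closedNbhd (ends : E → Sym2 V) (S : Set V) : Set V :=
  S ∪ {v | ∃ u ∈ S, ∃ e : E, ends e = s(u, v)}

/-- `X` is the minimum `(s,t)`-cut closest to `s` among all minimum `(s,t)`-cuts
satisfying the property `P`. -/
def IsClosestMinCutAmong (ends : E → Sym2 V) (s t : V) (P : Set E → Prop)
    (X : Set E) : Prop :=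
  IsMinimumCut ends X {s} {t} ∧ P X ∧
    ∀ Y : Set E, IsMinimumCut ends Y {s} {t} → P Y → Y ≠ X →
      RS ends Y {s} ⊆ RS ends X {s} → X.ncard < Y.ncard

/-- `C 0, …, C p` is the canonical sequence of non-crossing minimum `(s,t)`-cuts:
`C 0` is the unique minimum `(s,t)`-cut closest to `s`; `C i` is the unique minimum
`(s,t)`-cut closest to `s` among all minimum `(s,t)`-cuts `X` with
`N[R_s(C (i-1))] ⊆ R_s(X)`; and `p` is the largest index for which such a cut exists. -/
def CanonSeq (ends : E → Sym2 V) (s t : V) (p : ℕ) (C : ℕ → Set E) : Prop :=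
  IsClosestMinCutAmong ends s t (fun _ => True) (C 0) ∧
    (∀ i : ℕ, 0 < i → i ≤ p →
      IsClosestMinCutAmong ends s t
        (fun X => closedNbhd ends (RS ends (C (i - 1)) {s}) ⊆ RS ends X {s}) (C i)) ∧
    ¬ ∃ X : Set E, IsMinimumCut ends X {s} {t} ∧
        closedNbhd ends (RS ends (C p) {s}) ⊆ RS ends X {s}

/-- The blocks `V_0, …, V_{p+1}` associated with the canonical sequence of cuts. -/
def blockOf (ends : E → Sym2 V) (s : V) (p : ℕ) (C : ℕ → Set E) (i : ℕ) : Set V :=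
  if i = 0 then RS ends (C 0) {s}
  else if i ≤ p then RS ends (C i) {s} \ RS ends (C (i - 1)) {s}
  else Set.univ \ RS ends (C p) {s}

/-- Adjacency inside the induced subgraph `G[B]`. -/
def AdjIn (ends : E → Sym2 V) (B : Set V) (u v : V) : Prop :=
  u ∈ B ∧ v ∈ B ∧ ∃ e : E, ends e = s(u, v)

/-- Reachability inside the induced subgraph `G[B]`. -/
def ReachIn (ends : E → Sym2 V) (B : Set V) : V → V → Prop :=
  Relation.ReflTransGen (AdjIn ends B)

/-- The induced subgraph `G[B]` is connected. -/
def ConnIn (ends : E → Sym2 V) (B : Set V) : Prop :=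
  ∀ u ∈ B, ∀ v ∈ B, ReachIn ends B u v

/-- The connected component of `u` in the induced subgraph `G[B]`. -/
def compIn (ends : E → Sym2 V) (B : Set V) (u : V) : Set V :=
  {v | v ∈ B ∧ ReachIn ends B u v}

/-- The set of connected components of the induced subgraph `G[B]`. -/
def componentsIn (ends : E → Sym2 V) (B : Set V) : Set (Set V) :=
  {K | ∃ u ∈ B, K = compIn ends B u}

/-- The union of the blocks `V_a, …, V_b`. -/
def unionBlocks (ends : E → Sym2 V) (s : V) (p : ℕ) (C : ℕ → Set E)
    (a b : ℕ) : Set V :=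
  ⋃ j ∈ Set.Icc a b, blockOf ends s p C j

/-- `st` encodes the decomposition of the blocks `V_0, …, V_{p+1}` into bundles
`W_0, …, W_{q+1}`: bundle `W_i` consists of the blocks `V_{st i}, …, V_{st (i+1) - 1}`.
`W_0 = V_0`, and each further bundle is greedily either a single connected block, or a
maximal union of contiguous blocks inducing a disconnected subgraph. -/
def IsBundleSeq (ends : E → Sym2 V) (s : V) (p : ℕ) (C : ℕ → Set E)
    (q : ℕ) (st : ℕ → ℕ) : Prop :=
  st 0 = 0 ∧ st 1 = 1 ∧ st (q + 2) = p + 2 ∧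
    (∀ i j : ℕ, i < j → j ≤ q + 2 → st i < st j) ∧
    ∀ i : ℕ, 1 ≤ i → i ≤ q + 1 →
      (st (i + 1) = st i + 1 ∧ ConnIn ends (blockOf ends s p C (st i))) ∨
      (¬ ConnIn ends (blockOf ends s p C (st i)) ∧
        ¬ ConnIn ends (unionBlocks ends s p C (st i) (st (i + 1) - 1)) ∧
        ∀ j : ℕ, st (i + 1) - 1 < j → j ≤ p + 1 →
          ConnIn ends (unionBlocks ends s p C (st i) j))

/-- The bundle `W_i`. -/
def bundleOf (ends : E → Sym2 V) (s : V) (p : ℕ) (C : ℕ → Set E) (st : ℕ → ℕ)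
    (i : ℕ) : Set V :=
  unionBlocks ends s p C (st i) (st (i + 1) - 1)

/-- `C'_i` : the cut (among `C_0, …, C_p`) separating bundle `W_i` from `W_{i+1}`. -/
def interCut (C : ℕ → Set E) (st : ℕ → ℕ) (i : ℕ) : Set E :=
  C (st (i + 1) - 1)

/-- A bundle `W` is unaffected by `Z` if `N[W]` is contained in a single connected
component of `G - Z`. -/
def Unaffected (ends : E → Sym2 V) (Z : Set E) (W : Set V) : Prop :=
  ∀ u ∈ closedNbhd ends W, ∀ v ∈ closedNbhd ends W, Reach ends Z u v

/-- The stretch `W_{a,b} = W_a ∪ ⋯ ∪ W_b` of bundles. -/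
def stretchSet (ends : E → Sym2 V) (s : V) (p : ℕ) (C : ℕ → Set E) (st : ℕ → ℕ)
    (a b : ℕ) : Set V :=
  ⋃ i ∈ Set.Icc a b, bundleOf ends s p C st i

/-- The left interface of a stretch starting at bundle `W_a`. -/
def leftInterface (ends : E → Sym2 V) (s : V) (p : ℕ) (C : ℕ → Set E) (st : ℕ → ℕ)
    (a : ℕ) : Set V :=
  if a = 0 then {s}
  else {v | v ∈ bundleOf ends s p C st a ∧ ∃ e ∈ interCut C st (a - 1), v ∈ ends e}

/-- The right interface of a stretch ending at bundle `W_b`. -/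
def rightInterface (ends : E → Sym2 V) (s t : V) (p : ℕ) (C : ℕ → Set E)
    (st : ℕ → ℕ) (q b : ℕ) : Set V :=
  if b = q + 1 then {t}
  else {v | v ∈ bundleOf ends s p C st b ∧ ∃ e ∈ interCut C st b, v ∈ ends e}

/-- `W_{a,b}` is a maximal stretch of bundles all affected by `Z`. -/
def MaxAffStretch (ends : E → Sym2 V) (s : V) (p : ℕ) (C : ℕ → Set E)
    (st : ℕ → ℕ) (q : ℕ) (Z : Set E) (a b : ℕ) : Prop :=
  a ≤ b ∧ b ≤ q + 1 ∧
    (∀ i : ℕ, a ≤ i → i ≤ b → ¬ Unaffected ends Z (bundleOf ends s p C st i)) ∧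
    (a = 0 ∨ Unaffected ends Z (bundleOf ends s p C st (a - 1))) ∧
    (b = q + 1 ∨ Unaffected ends Z (bundleOf ends s p C st (b + 1)))

/-- `W_{a,b}` is a maximal stretch of bundles affected by `Z` containing both a vertex
reachable from `s` and a vertex reachable from `t` in `G - Z`. -/
def StronglyAffStretch (ends : E → Sym2 V) (s t : V) (p : ℕ) (C : ℕ → Set E)
    (st : ℕ → ℕ) (q : ℕ) (Z : Set E) (a b : ℕ) : Prop :=
  MaxAffStretch ends s p C st q Z a b ∧
    (stretchSet ends s p C st a b ∩ RS ends Z {s}).Nonempty ∧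
    (stretchSet ends s p C st a b ∩ RS ends Z {t}).Nonempty

/-- Adjacency inside the induced subgraph `G[B]` avoiding the edge set `X`. -/
def AdjInX (ends : E → Sym2 V) (B : Set V) (X : Set E) (u v : V) : Prop :=
  u ∈ B ∧ v ∈ B ∧ ∃ e, e ∉ X ∧ ends e = s(u, v)

/-- Reachability inside `G[B] - X`. -/
def ReachInX (ends : E → Sym2 V) (B : Set V) (X : Set E) : V → V → Prop :=
  Relation.ReflTransGen (AdjInX ends B X)

/-- `X` is a star `(a,b)`-cut of the induced subgraph `H = G[B]`: in `H - X` no path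
connects `a` and `b`, and every edge of `X` has exactly one endpoint reachable from
`a` in `H - X`. -/
def IsStarCutIn (ends : E → Sym2 V) (B : Set V) (a b : V) (X : Set E) : Prop :=
  ¬ ReachInX ends B X a b ∧
    ∀ e ∈ X, ∃ u v : V, ends e = s(u, v) ∧
      ReachInX ends B X a u ∧ ¬ ReachInX ends B X a v

end FlowAug

namespace FlowAug

/-- Let `Z` be a star `(s,t)`-cut of a connected multigraph `G`, let
`Ĥ ⊆ V(G) \ {s,t}` and `s_H ∉ Ĥ` be such that every edge with exactly one endpoint in
`Ĥ` has its other endpoint equal to `s_H`, let `H = G[Ĥ ∪ {s_H}]`, and let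
`t_H ∈ Ĥ` with `t_H ∉ R_s(Z)`.  Then either `Z ∩ E(H) = ∅`, or `Z ∩ E(H)` is a star
`(s_H, t_H)`-cut of `H`. -/
theorem starCut_restriction_to_extended_component {V E : Type} [Fintype V] [Fintype E]
    (ends : E → Sym2 V) (hloop : ∀ e, ¬ (ends e).IsDiag)
    (hconn : ∀ u v : V, Reach ends (∅ : Set E) u v)
    (s t : V) (hst : s ≠ t)
    (Z : Set E) (hZ : IsStarCut ends s t Z)
    (H : Set V) (sH : V)
    (hHs : s ∉ H) (hHt : t ∉ H) (hsH : sH ∉ H)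
    (hbound : ∀ (e : E) (u v : V), ends e = s(u, v) → u ∈ H → v ∉ H → v = sH)
    (tH : V) (htH : tH ∈ H) (htHZ : tH ∉ RS ends Z {s}) :
    {e | e ∈ Z ∧ ∀ v ∈ ends e, v ∈ H ∪ {sH}} = ∅ ∨
      IsStarCutIn ends (H ∪ {sH}) sH tH {e | e ∈ Z ∧ ∀ v ∈ ends e, v ∈ H ∪ {sH}} := by
  classical
  set B : Set V := H ∪ {sH} with hB
  set K : Set E := {e | e ∈ Z ∧ ∀ v ∈ ends e, v ∈ B} with hKdef
  -- Key claim: any vertex of B reachable from s in G - Z shows sH ∈ R_s(Z) and is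
  -- reachable from sH inside G[B] - K.
  have claim : ∀ v : V, Reach ends Z s v → v ∈ B →
      sH ∈ RS ends Z {s} ∧ ReachInX ends B K sH v := by
    intro v hreach
    have hreach' : Relation.ReflTransGen (Adj ends Z) s v := hreach
    induction hreach' with
    | refl =>
      intro hsB
      have hs : s = sH := by
        rcases hsB with h | h
        · exact absurd h hHs
        · exact h
      subst hs
      exact ⟨⟨s, rfl, Relation.ReflTransGen.refl⟩, Relation.ReflTransGen.refl⟩
    | @tail b c hsw hadj ih =>
      intro hcB
      rcases hcB with hcH | hcsH
      · by_cases hbB : b ∈ B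
        · obtain ⟨h1, h2⟩ := ih hsw hbB
          refine ⟨h1, h2.tail ?_⟩
          obtain ⟨e, heZ, hends⟩ := hadj
          exact ⟨hbB, Or.inl hcH, e, fun heK => heZ heK.1, hends⟩
        · exfalso
          obtain ⟨e, heZ, hends⟩ := hadj
          have hbH : b ∉ H := fun h => hbB (Or.inl h)
          have hbsH : b = sH := hbound e c b (by rw [hends, Sym2.eq_swap]) hcH hbH
          exact hbB (Or.inr hbsH)
      · have hc : c = sH := hcsH
        subst hc
        exact ⟨⟨s, rfl, hsw.tail hadj⟩, Relation.ReflTransGen.refl⟩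
  by_cases hKe : K = ∅
  · exact Or.inl hKe
  · right
    obtain ⟨e0, he0⟩ := Set.nonempty_iff_ne_empty.2 hKe
    obtain ⟨u0, v0, hends0, hu0, hv0⟩ := hZ.2 e0 he0.1
    have hu0B : u0 ∈ B := he0.2 u0 (by rw [hends0]; exact Sym2.mem_mk_left _ _)
    have hreach0 : Reach ends Z s u0 := by
      obtain ⟨s', hs', hr⟩ := hu0
      rwa [show s' = s from hs'] at hr
    have hsHR : sH ∈ RS ends Z {s} := (claim u0 hreach0 hu0B).1
    have hsreach : Reach ends Z s sH := by
      obtain ⟨s', hs', hr⟩ := hsHR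
      rwa [show s' = s from hs'] at hr
    -- reachability in G[B] - K implies reachability in G - Z
    have mono : ∀ x : V, ReachInX ends B K sH x → Reach ends Z sH x := by
      intro x hx
      have hx' : Relation.ReflTransGen (AdjInX ends B K) sH x := hx
      induction hx' with
      | refl => exact Relation.ReflTransGen.refl
      | @tail b c h1 h2 ih =>
        obtain ⟨haB, hbB2, e, heK, hends⟩ := h2
        refine (ih h1).tail ⟨e, ?_, hends⟩
        intro heZ
        refine heK ⟨heZ, fun w hw => ?_⟩
        rw [hends] at hw
        rcases Sym2.mem_iff.mp hw with rfl | rfl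
        · exact haB
        · exact hbB2
    have toRS : ∀ x : V, ReachInX ends B K sH x → x ∈ RS ends Z {s} := by
      intro x hx
      exact ⟨s, rfl, hsreach.trans (mono x hx)⟩
    constructor
    · intro h
      exact htHZ (toRS tH h)
    · intro e he
      obtain ⟨u, v, hends, hu, hv⟩ := hZ.2 e he.1
      have huB : u ∈ B := he.2 u (by rw [hends]; exact Sym2.mem_mk_left _ _)
      have hru : Reach ends Z s u := by
        obtain ⟨s', hs', hr⟩ := hu
        rwa [show s' = s from hs'] at hr
      exact ⟨u, v, hends, (claim u hru huB).2, fun h => hv (toRS v h)⟩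


end FlowAug
end

section
/- For every real c₁ ≥ 0 there exists a real c₂ ≥ 0 such that for all reals x₁, x₂, x₀ > 0: c₂·(x₁ + x₂ + 2x₀)·ln(x₁ + x₂ + 2x₀) + x₁·ln(x₁) + x₂·ln(x₂) + 2x₀·ln(x₀) ≥ (x₁ + x₂ + 2x₀)·ln(x₁ + x₂ + 2x₀) + c₂·(x₁ + x₀)·ln(x₁ + x₀) + c₂·(x₂ + x₀)·ln(x₂ + x₀) + c₁·x₀. -/
/-!
With `a = x₁ + x₀` and `b = x₂ + x₀`, the entropy of mixing `φ(u, v) = (u+v) ln(u+v) - u ln u - v ln v`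
splits the four-part entropy as `φ(a, b) + φ(x₁, x₀) + φ(x₂, x₀)`, and the inequality reads
`(c₂ - 1) φ(a, b) ≥ φ(x₁, x₀) + φ(x₂, x₀) + c₁ x₀`. Convexity of `t ln t` makes `φ` monotone in
each argument, so both `φ(x₁, x₀)` and `φ(x₂, x₀)` are at most `φ(a, b)`, and
`x₀ ≤ 2 ln 2 · x₀ = φ(x₀, x₀) ≤ φ(a, b)`. Hence `c₂ = c₁ + 3` works.
-/

open Real

theorem ConvexOn.map_add_sub_le_map_add_sub {s : Set ℝ} {f : ℝ → ℝ} (hf : ConvexOn ℝ s f)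
    {x y d : ℝ} (hx : x ∈ s) (hyd : y + d ∈ s) (hxy : x ≤ y) (hd : 0 ≤ d) :
    f (x + d) - f x ≤ f (y + d) - f y := by
  rcases hd.eq_or_lt with rfl | hd
  · simp
  have hmem : ∀ z, x ≤ z → z ≤ y + d → z ∈ s := fun z h₁ h₂ =>
    hf.1.ordConnected.out hx hyd ⟨h₁, h₂⟩
  have hxd := hmem (x + d) (by linarith) (by linarith)
  have hy := hmem y hxy (by linarith)
  have h₁ : slope f x (x + d) ≤ slope f x (y + d) :=
    hf.slope_mono hx ⟨hxd, Set.mem_compl_singleton_iff.2 (by linarith : x < x + d).ne'⟩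
      ⟨hyd, Set.mem_compl_singleton_iff.2 (by linarith : x < y + d).ne'⟩ (by linarith)
  have h₂ : slope f (y + d) x ≤ slope f (y + d) y :=
    hf.slope_mono hyd ⟨hx, Set.mem_compl_singleton_iff.2 (by linarith : x < y + d).ne⟩
      ⟨hy, Set.mem_compl_singleton_iff.2 (by linarith : y < y + d).ne⟩ hxy
  rw [slope_comm f x (y + d)] at h₁
  rw [slope_comm f (y + d) y] at h₂
  have h := h₁.trans h₂
  rw [slope_def_field, slope_def_field, add_sub_cancel_left, add_sub_cancel_left] at h
  exact (div_le_div_iff_of_pos_right hd).1 h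

noncomputable def mixingEntropy (u v : ℝ) : ℝ := (u + v) * log (u + v) - u * log u - v * log v

namespace mixingEntropy

theorem comm (u v : ℝ) : mixingEntropy u v = mixingEntropy v u := by
  unfold mixingEntropy
  rw [add_comm u v]
  ring

theorem mono_left {u u' v : ℝ} (hu : 0 ≤ u) (huu' : u ≤ u') (hv : 0 ≤ v) :
    mixingEntropy u v ≤ mixingEntropy u' v := by
  have := convexOn_mul_log.map_add_sub_le_map_add_sub (Set.mem_Ici.2 hu)
    (Set.mem_Ici.2 (by linarith : 0 ≤ u' + v)) huu' hv
  unfold mixingEntropy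
  linarith

theorem mono {u u' v v' : ℝ} (hu : 0 ≤ u) (huu' : u ≤ u') (hv : 0 ≤ v) (hvv' : v ≤ v') :
    mixingEntropy u v ≤ mixingEntropy u' v' :=
  calc mixingEntropy u v ≤ mixingEntropy u' v := mono_left hu huu' hv
    _ = mixingEntropy v u' := comm _ _
    _ ≤ mixingEntropy v' u' := mono_left hv hvv' (hu.trans huu')
    _ = mixingEntropy u' v' := comm _ _

theorem self (u : ℝ) : mixingEntropy u u = 2 * log 2 * u := by
  rcases eq_or_ne u 0 with rfl | hu
  · simp [mixingEntropy]
  rw [mixingEntropy, ← two_mul, log_mul two_ne_zero hu]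
  ring

theorem le_self {u : ℝ} (hu : 0 ≤ u) : u ≤ mixingEntropy u u := by
  rw [self]
  nlinarith [log_two_gt_d9]

end mixingEntropy

/-- For every real `c₁ ≥ 0` there exists a real `c₂ ≥ 0` such that
for all positive reals `x₁, x₂, x₀`:
`c₂·σ·ln σ + x₁·ln x₁ + x₂·ln x₂ + 2x₀·ln x₀ ≥
  σ·ln σ + c₂·(x₁+x₀)·ln(x₁+x₀) + c₂·(x₂+x₀)·ln(x₂+x₀) + c₁·x₀`
where `σ = x₁ + x₂ + 2x₀`. -/
theorem xlogx_inequality (c₁ : ℝ) (hc₁ : 0 ≤ c₁) :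
    ∃ c₂ : ℝ, 0 ≤ c₂ ∧ ∀ x₁ x₂ x₀ : ℝ, 0 < x₁ → 0 < x₂ → 0 < x₀ →
      c₂ * (x₁ + x₂ + 2 * x₀) * Real.log (x₁ + x₂ + 2 * x₀) +
          x₁ * Real.log x₁ + x₂ * Real.log x₂ + 2 * x₀ * Real.log x₀ ≥
        (x₁ + x₂ + 2 * x₀) * Real.log (x₁ + x₂ + 2 * x₀) +
          c₂ * (x₁ + x₀) * Real.log (x₁ + x₀) +
          c₂ * (x₂ + x₀) * Real.log (x₂ + x₀) + c₁ * x₀ := by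
  refine ⟨c₁ + 3, by linarith, fun x₁ x₂ x₀ h₁ h₂ h₀ => ?_⟩
  have hφ₁ : mixingEntropy x₁ x₀ ≤ mixingEntropy (x₁ + x₀) (x₂ + x₀) :=
    mixingEntropy.mono h₁.le (by linarith) h₀.le (by linarith)
  have hφ₂ : mixingEntropy x₂ x₀ ≤ mixingEntropy (x₁ + x₀) (x₂ + x₀) := by
    rw [mixingEntropy.comm]
    exact mixingEntropy.mono h₀.le (by linarith) h₂.le (by linarith)
  have hφ₀ : x₀ ≤ mixingEntropy (x₁ + x₀) (x₂ + x₀) :=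
    (mixingEntropy.le_self h₀.le).trans (mixingEntropy.mono h₀.le (by linarith) h₀.le (by linarith))
  have hc₁x₀ := mul_le_mul_of_nonneg_left hφ₀ hc₁
  rw [show x₁ + x₂ + 2 * x₀ = x₁ + x₀ + (x₂ + x₀) by ring]
  unfold mixingEntropy at *
  linarith
end

section
/- Let r ≥ 1 and let rK₂ denote the graph consisting of r pairwise disjoint edges (2r vertices, r edges). If a finite simple graph G contains no induced subgraph isomorphic to rK₂, then any graph obtained from G by a sequence of vertex identifications also contains no induced subgraph isomorphic to rK₂. -/
/-!
An induced copy of `rK₂` in `identify G u v` avoids the isolated vertex `v`, and at most one of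
its vertices is the merged vertex `u`. Every vertex of the copy other than `u` stands for itself
in `G`, and the unique matching edge at `u` comes from an edge of `G` at `u` or at `v`; choosing
that endpoint for `u` gives an induced copy of `rK₂` in `G`. Induction along the sequence of
identifications finishes the proof.
-/

namespace TwoKTwoFree

/-- `rK₂` : the simple graph consisting of `r` pairwise disjoint edges. -/
def matchingGraph (r : ℕ) : SimpleGraph (Fin r × Bool) where
  Adj a b := a.1 = b.1 ∧ a.2 ≠ b.2
  symm := by
    constructor
    rintro a b ⟨h1, h2⟩
    exact ⟨h1.symm, h2.symm⟩
  loopless := by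
    constructor
    rintro a ⟨_, h⟩
    exact h rfl

/-- The graph obtained from `G` by identifying the vertices `u` and `v` into the single
vertex `u` (discarding any loop that arises); the vertex `v` is left behind isolated. -/
def identify {V : Type} (G : SimpleGraph V) (u v : V) : SimpleGraph V where
  Adj a b := a ≠ b ∧ a ≠ v ∧ b ≠ v ∧
    ∃ a' b', G.Adj a' b' ∧ (a' = a ∨ (a' = v ∧ a = u)) ∧ (b' = b ∨ (b' = v ∧ b = u))
  symm := by
    constructor
    rintro a b ⟨hab, hav, hbv, a', b', hadj, ha, hb⟩
    exact ⟨hab.symm, hbv, hav, b', a', hadj.symm, hb, ha⟩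
  loopless := by
    constructor
    rintro a ⟨h, _⟩
    exact h rfl

section Matching

variable {r : ℕ}

def matchingPartner (a : Fin r × Bool) : Fin r × Bool := (a.1, !a.2)

theorem matchingPartner_matchingPartner (a : Fin r × Bool) :
    matchingPartner (matchingPartner a) = a := by
  simp [matchingPartner]

theorem matchingPartner_ne (a : Fin r × Bool) : matchingPartner a ≠ a := by
  simp [matchingPartner, Prod.ext_iff]

theorem matchingGraph_adj_iff {a b : Fin r × Bool} :
    (matchingGraph r).Adj a b ↔ b = matchingPartner a := by
  obtain ⟨i, s⟩ := a
  obtain ⟨j, t⟩ := b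
  cases s <;> cases t <;> simp [matchingGraph, matchingPartner, eq_comm]

theorem matchingGraph_adj_matchingPartner (a : Fin r × Bool) :
    (matchingGraph r).Adj a (matchingPartner a) :=
  matchingGraph_adj_iff.2 rfl

end Matching

section Identify

variable {V : Type} {G : SimpleGraph V} {u v a b : V}

theorem ne_of_identify_adj (h : (identify G u v).Adj a b) : a ≠ v := h.2.1

theorem adj_of_identify_adj (h : (identify G u v).Adj a b) (ha : a ≠ u) (hb : b ≠ u) :
    G.Adj a b := by
  obtain ⟨-, -, -, a', b', hadj, ha', hb'⟩ := h
  obtain rfl : a' = a := ha'.resolve_right fun h ↦ ha h.2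
  obtain rfl : b' = b := hb'.resolve_right fun h ↦ hb h.2
  exact hadj

variable [DecidableEq V]

def identifyMap (u v : V) (a : V) : V := if a = v then u else a

theorem identifyMap_self : identifyMap u v v = u := if_pos rfl

theorem identifyMap_of_ne (h : a ≠ v) : identifyMap u v a = a := if_neg h

theorem identifyMap_ne (huv : u ≠ v) (a : V) : identifyMap u v a ≠ v := by
  rcases eq_or_ne a v with rfl | h
  · rwa [identifyMap_self]
  · rwa [identifyMap_of_ne h]

theorem identify_adj_identifyMap (huv : u ≠ v) (h : G.Adj a b)
    (hne : identifyMap u v a ≠ identifyMap u v b) :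
    (identify G u v).Adj (identifyMap u v a) (identifyMap u v b) := by
  have hrep : ∀ c, c = identifyMap u v c ∨ (c = v ∧ identifyMap u v c = u) := by
    intro c
    rcases eq_or_ne c v with rfl | hc
    · exact Or.inr ⟨rfl, identifyMap_self⟩
    · exact Or.inl (identifyMap_of_ne hc).symm
  exact ⟨hne, identifyMap_ne huv a, identifyMap_ne huv b, a, b, h, hrep a, hrep b⟩

theorem exists_adj_of_identify_adj (h : (identify G u v).Adj a b) (hb : b ≠ u) :
    ∃ a', G.Adj a' b ∧ identifyMap u v a' = a := by
  obtain ⟨-, hav, -, a', b', hadj, ha', hb'⟩ := h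
  obtain rfl : b' = b := hb'.resolve_right fun h ↦ hb h.2
  refine ⟨a', hadj, ?_⟩
  rcases ha' with rfl | ⟨rfl, rfl⟩
  · exact identifyMap_of_ne hav
  · exact identifyMap_self

def Embedding.ofIdentify {W : Type*} {H : SimpleGraph W} (huv : u ≠ v)
    (f : H ↪g identify G u v) (g : W → V) (hg : ∀ w, identifyMap u v (g w) = f w)
    (hadj : ∀ a b, H.Adj a b → G.Adj (g a) (g b)) : H ↪g G where
  toFun := g
  inj' a b h := f.injective (by rw [← hg a, ← hg b, h])
  map_rel_iff' {a b} := by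
    refine ⟨fun h ↦ f.map_rel_iff.1 ?_, hadj a b⟩
    have hne : f a ≠ f b := f.injective.ne fun hab ↦ h.ne (congrArg g hab)
    rw [← hg a, ← hg b] at hne ⊢
    exact identify_adj_identifyMap huv h hne

end Identify

theorem nonempty_matchingGraph_embedding_of_identify {V : Type} {r : ℕ} {G : SimpleGraph V}
    {u v : V} (huv : u ≠ v) (f : matchingGraph r ↪g identify G u v) :
    Nonempty (matchingGraph r ↪g G) := by
  classical
  have hfv : ∀ z, f z ≠ v := fun z ↦
    ne_of_identify_adj (f.map_rel_iff.2 (matchingGraph_adj_matchingPartner z))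
  by_cases hu : ∃ x, f x = u
  · obtain ⟨x, hx⟩ := hu
    have hfu : ∀ z, z ≠ x → f z ≠ u := fun z hz h ↦ hz (f.injective (h.trans hx.symm))
    obtain ⟨w, hw, hπw⟩ := exists_adj_of_identify_adj
      (f.map_rel_iff.2 (matchingGraph_adj_matchingPartner x)) (hfu _ (matchingPartner_ne x))
    refine ⟨Embedding.ofIdentify huv f (Function.update f x w) (fun z ↦ ?_) fun a b hab ↦ ?_⟩
    · rcases eq_or_ne z x with rfl | hz
      · rw [Function.update_self, hπw]
      · rw [Function.update_of_ne hz, identifyMap_of_ne (hfv z)]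
    · rw [matchingGraph_adj_iff] at hab
      subst hab
      by_cases hax : a = x
      · subst hax
        rwa [Function.update_self, Function.update_of_ne (matchingPartner_ne a)]
      by_cases hpx : matchingPartner a = x
      · rw [← hpx, matchingPartner_matchingPartner] at hw
        rw [Function.update_of_ne hax, hpx, Function.update_self]
        exact hw.symm
      rw [Function.update_of_ne hax, Function.update_of_ne hpx]
      exact adj_of_identify_adj (f.map_rel_iff.2 (matchingGraph_adj_matchingPartner a))
        (hfu a hax) (hfu _ hpx)
  · rw [not_exists] at hu
    exact ⟨Embedding.ofIdentify huv f f (fun z ↦ identifyMap_of_ne (hfv z))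
      fun a b hab ↦ adj_of_identify_adj (f.map_rel_iff.2 hab) (hu a) (hu b)⟩

theorem rK2_free_of_identifications_general {V : Type} (r : ℕ)
    (G G' : SimpleGraph V)
    (hfree : ¬ Nonempty (matchingGraph r ↪g G))
    (hseq : Relation.ReflTransGen
      (fun H H' => ∃ u v : V, u ≠ v ∧ H' = identify H u v) G G') :
    ¬ Nonempty (matchingGraph r ↪g G') := by
  induction hseq with
  | refl => exact hfree
  | tail _ hstep ih =>
    obtain ⟨u, v, huv, rfl⟩ := hstep
    exact fun ⟨f⟩ ↦ ih (nonempty_matchingGraph_embedding_of_identify huv f)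

/-- If a finite simple graph `G` contains no induced subgraph
isomorphic to `rK₂` (with `r ≥ 1`), then any graph `G'` obtained from `G` by a sequence
of vertex identifications contains no induced subgraph isomorphic to `rK₂` either. -/
theorem rK2_free_of_identifications {V : Type} [Fintype V] (r : ℕ) (hr : 1 ≤ r)
    (G G' : SimpleGraph V)
    (hfree : ¬ Nonempty (matchingGraph r ↪g G))
    (hseq : Relation.ReflTransGen
      (fun H H' => ∃ u v : V, u ≠ v ∧ H' = identify H u v) G G') :
    ¬ Nonempty (matchingGraph r ↪g G') :=
  rK2_free_of_identifications_general r G G' hfree hseq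

end TwoKTwoFree
end

section
/- Let G be a finite undirected multigraph with s, t ∈ V(G), s ≠ t, such that s and t are connected in G and every minimum (s,t)-cut of G contains at least one edge incident with s or with t. Let G' be obtained from G by adding, for every edge of G incident with s or t, one additional parallel copy of that edge. Then λ_{G'}(s,t) > λ_G(s,t). -/
/-!
Let `X'` be a minimum `(s,t)`-cut of the graph `G'` with the terminal edges doubled, and suppose
`|X'| ≤ λ_G(s,t)`. Its original edges `X` still form an `(s,t)`-cut of `G`, so `X' = X` and `X` is a
minimum cut of `G`. By hypothesis `X` contains a terminal edge `e`; its copy survives in `G' - X'`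
and can take over the role of `e`, so `X \ {e}` is already an `(s,t)`-cut of `G`, contradicting
minimality.
-/

namespace FlowAug

variable {V E E' : Type}

def dupEnds (ends : E → Sym2 V) (P : E → Prop) : E ⊕ {e // P e} → Sym2 V :=
  Sum.elim ends fun e => ends e.1

section Transfer

variable {ends : E → Sym2 V} {ends' : E' → Sym2 V} {X : Set E} {X' : Set E'}

lemma Reach.mono_adj (h : ∀ u v, Adj ends X u v → Adj ends' X' u v) {u v : V}
    (hr : Reach ends X u v) : Reach ends' X' u v :=
  Relation.ReflTransGen.mono h _ _ hr

lemma RS_subset_of_adj_imp (h : ∀ u v, Adj ends X u v → Adj ends' X' u v) (S : Set V) :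
    RS ends X S ⊆ RS ends' X' S := fun _ ⟨u, hu, hr⟩ => ⟨u, hu, Reach.mono_adj h hr⟩

lemma IsCut.of_adj_imp {S T : Set V} (h : ∀ u v, Adj ends X u v → Adj ends' X' u v)
    (hX' : IsCut ends' X' S T) : IsCut ends X S T :=
  Set.eq_empty_of_subset_empty <| hX' ▸
    Set.inter_subset_inter (RS_subset_of_adj_imp h S) (RS_subset_of_adj_imp h T)

end Transfer

lemma Reach.eq_of_univ {ends : E → Sym2 V} {u v : V} (h : Reach ends Set.univ u v) :
    u = v := by
  induction h with
  | refl => rfl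
  | tail _ hadj =>
    obtain ⟨e, he, -⟩ := hadj
    exact absurd (Set.mem_univ e) he

lemma isCut_univ (ends : E → Sym2 V) {s t : V} (hst : s ≠ t) :
    IsCut ends Set.univ {s} {t} := by
  rw [IsCut, Set.eq_empty_iff_forall_notMem]
  rintro v ⟨⟨_, rfl, hs⟩, ⟨_, rfl, ht⟩⟩
  exact hst (hs.eq_of_univ.trans ht.eq_of_univ.symm)

lemma lamCut_le_ncard (ends : E → Sym2 V) {s t : V} {X : Set E}
    (hX : IsCut ends X {s} {t}) : lamCut ends s t ≤ X.ncard :=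
  Nat.sInf_le ⟨X, hX, rfl⟩

lemma exists_isCut_ncard_eq_lamCut (ends : E → Sym2 V) {s t : V} (hst : s ≠ t) :
    ∃ X : Set E, IsCut ends X {s} {t} ∧ X.ncard = lamCut ends s t :=
  Nat.sInf_mem (s := {n | ∃ X : Set E, IsCut ends X {s} {t} ∧ X.ncard = n})
    ⟨_, Set.univ, isCut_univ ends hst, rfl⟩

lemma isMinimumCut_of_ncard_le_lamCut {ends : E → Sym2 V} {s t : V} {X : Set E}
    (hX : IsCut ends X {s} {t}) (hle : X.ncard ≤ lamCut ends s t) :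
    IsMinimumCut ends X {s} {t} :=
  ⟨hX, fun _ hY => hle.trans (lamCut_le_ncard ends hY)⟩

lemma IsMinimumCut.not_isCut_diff_singleton [Finite E] {ends : E → Sym2 V} {X : Set E}
    {S T : Set V} (hX : IsMinimumCut ends X S T) {e : E} (he : e ∈ X) :
    ¬ IsCut ends (X \ {e}) S T := fun hcut =>
  (hX.2 _ hcut).not_gt (Set.ncard_sdiff_singleton_lt_of_mem he)

section Duplicate

variable {ends : E → Sym2 V} {P : E → Prop} {S T : Set V} {X' : Set (E ⊕ {e // P e})}

lemma IsCut.preimage_inl (hX' : IsCut (dupEnds ends P) X' S T) :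
    IsCut ends (Sum.inl ⁻¹' X') S T :=
  hX'.of_adj_imp fun _ _ ⟨f, hf, hfuv⟩ => ⟨Sum.inl f, hf, hfuv⟩

lemma IsCut.preimage_inl_diff_singleton (hX' : IsCut (dupEnds ends P) X' S T) {e : E}
    (he : P e) (hcopy : Sum.inr ⟨e, he⟩ ∉ X') :
    IsCut ends (Sum.inl ⁻¹' X' \ {e}) S T := by
  refine hX'.of_adj_imp fun _ _ ⟨f, hf, hfuv⟩ => ?_
  by_cases hfe : f = e
  · subst hfe
    exact ⟨Sum.inr ⟨f, he⟩, hcopy, hfuv⟩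
  · exact ⟨Sum.inl f, fun hfX' => hf ⟨hfX', hfe⟩, hfuv⟩

theorem lamCut_lt_lamCut_dupEnds [Finite E] {s t : V} (hst : s ≠ t)
    (hmin : ∀ X : Set E, IsMinimumCut ends X {s} {t} → ∃ e ∈ X, P e) :
    lamCut ends s t < lamCut (dupEnds ends P) s t := by
  by_contra! hle
  obtain ⟨X', hX'cut, hX'card⟩ := exists_isCut_ncard_eq_lamCut (dupEnds ends P) hst
  set X := Sum.inl ⁻¹' X'
  have hXcut : IsCut ends X {s} {t} := hX'cut.preimage_inl
  have hlam := lamCut_le_ncard ends hXcut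
  have himage : Sum.inl '' X ⊆ X' := Set.image_preimage_subset _ _
  have himage_card : (Sum.inl '' X : Set (E ⊕ {e // P e})).ncard = X.ncard :=
    Set.ncard_image_of_injective _ Sum.inl_injective
  have hX'le := Set.ncard_le_ncard himage
  have hX'eq : Sum.inl '' X = X' := Set.eq_of_subset_of_ncard_le himage (by omega)
  have hXmin : IsMinimumCut ends X {s} {t} := isMinimumCut_of_ncard_le_lamCut hXcut (by omega)
  obtain ⟨e, heX, he⟩ := hmin X hXmin
  have hcopy : Sum.inr ⟨e, he⟩ ∉ X' := by
    rw [← hX'eq]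
    rintro ⟨_, -, h⟩
    exact Sum.inl_ne_inr h
  exact hXmin.not_isCut_diff_singleton heX (hX'cut.preimage_inl_diff_singleton he hcopy)

end Duplicate

theorem duplicating_terminal_edges_increases_flow_general {V E : Type} [Fintype E]
    (ends : E → Sym2 V)
    (s t : V) (hst : s ≠ t)
    (hmin : ∀ X : Set E, IsMinimumCut ends X {s} {t} →
      ∃ e ∈ X, s ∈ ends e ∨ t ∈ ends e) :
    lamCut ends s t <
      lamCut (Sum.elim ends fun e : {e : E // s ∈ ends e ∨ t ∈ ends e} => ends e.1)
        s t :=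
  lamCut_lt_lamCut_dupEnds hst hmin

/-- Suppose `s` and `t` are connected in `G` and every minimum
`(s,t)`-cut of `G` contains an edge incident with `s` or `t`.  Let `G'` be obtained
from `G` by adding one parallel copy of every edge incident with `s` or `t` (modelled
by edge type `E ⊕ {e // s ∈ ends e ∨ t ∈ ends e}`).  Then `λ_{G'}(s,t) > λ_G(s,t)`. -/
theorem duplicating_terminal_edges_increases_flow {V E : Type} [Fintype V] [Fintype E]
    (ends : E → Sym2 V) (hloop : ∀ e, ¬ (ends e).IsDiag)
    (s t : V) (hst : s ≠ t)
    (hconn : Reach ends (∅ : Set E) s t)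
    (hmin : ∀ X : Set E, IsMinimumCut ends X {s} {t} →
      ∃ e ∈ X, s ∈ ends e ∨ t ∈ ends e) :
    lamCut ends s t <
      lamCut (Sum.elim ends fun e : {e : E // s ∈ ends e ∨ t ∈ ends e} => ends e.1)
        s t :=
  duplicating_terminal_edges_increases_flow_general ends s t hst hmin

end FlowAug
end
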